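/- Let 0 < p < 1 < q. Then there exist 2×2 positive semidefinite complex matrices x and y such that ‖(x^q + y^q)^{1/q}‖_p > ‖x + y‖_p, where ‖·‖_p is the Schatten p-quasinorm. -/

import Mathlib

open scoped ENNReal ComplexOrder
open Matrix

open Matrix in
/-- Power of a positive semidefinite matrix via the functional calculus
(junk value `0` if the matrix is not Hermitian). -/
noncomputable def mpow {ι : Type*} [Fintype ι] [DecidableEq ι]
    (a : Matrix ι ι ℂ) (p : ℝ) : Matrix ι ι ℂ :=
  if ha : a.IsHermitian then ha.cfc (fun x => x ^ p) else 0

open Matrix in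
/-- Schatten `p`-(quasi)norm for `0 < p < ∞`: `‖a‖_p = (tr |a|^p)^(1/p)`,
where `|a|^p = (aᴴ a)^(p/2)`. -/
noncomputable def snorm {ι : Type*} [Fintype ι] [DecidableEq ι]
    (p : ℝ) (a : Matrix ι ι ℂ) : ℝ :=
  ((mpow (aᴴ * a) (p / 2)).trace).re ^ (1 / p)

open Matrix in
/-- Schatten norm for `p ∈ (0, ∞]`; `p = ∞` gives the operator norm. -/
noncomputable def snormE {ι : Type*} [Fintype ι] [DecidableEq ι]
    (p : ℝ≥0∞) (a : Matrix ι ι ℂ) : ℝ :=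
  if p = ∞ then ‖Matrix.toEuclideanCLM (𝕜 := ℂ) a‖ else snorm p.toReal a

/-!
Take `x = J`, the all-ones matrix, and `y = t E₂₂`. Since `J² = 2J` and `E₂₂² = E₂₂`, one gets
`x^q = 2^(q-1) J` and `y^q = t^q E₂₂`, so both sides are Schatten quasinorms of matrices
`c J + u E₂₂`. Their eigenvalues have sum `2c + u` and product `cu`, so one of them lies in
`[2c, 2c + u]` and the other in `[cu / (2c + u), u / 2]`. This gives
`‖x + y‖_p^p ≤ (2 + t)^p + (t/2)^p ≤ 2^p + t + 2^(-p) t^p` and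
`‖(x^q + y^q)^(1/q)‖_p^p ≥ 2^p + t^p (2^(q-1) / (2^q + t^q))^(p/q)`.
As `t → 0⁺` the coefficients of `t^p` tend to `2^(-p) < 2^(-p/q)`, while `t = o(t^p)`.
-/

section CFC
variable {A : Type*} [Ring A] [StarRing A] [Algebra ℝ A] [TopologicalSpace A]
  [ContinuousFunctionalCalculus ℝ A IsSelfAdjoint]

lemma cfc_eq_smul_of_mul_self_eq_smul {a : A} (ha : IsSelfAdjoint a) {c : ℝ}
    (h : a * a = c • a) {f : ℝ → ℝ} (hf : f 0 = 0) : cfc f a = (f c / c) • a := by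
  have hspec : (spectrum ℝ a).EqOn (fun x ↦ x * x) (fun x ↦ c * x) :=
    eqOn_of_cfc_eq_cfc (by rw [cfc_mul _ _ a, cfc_id' ℝ a, cfc_const_mul_id c a, h])
  rw [← cfc_const_mul_id (f c / c) a]
  refine cfc_congr fun x hx ↦ ?_
  rcases mul_eq_mul_right_iff.mp (hspec hx) with rfl | rfl
  · rcases eq_or_ne x 0 with rfl | hx0
    · simp [hf]
    · field_simp
  · simp [hf]

end CFC

namespace Matrix

lemma IsHermitian.trace_cfc {n 𝕜 : Type*} [RCLike 𝕜] [Fintype n] [DecidableEq n]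
    {A : Matrix n n 𝕜} (hA : A.IsHermitian) (f : ℝ → ℝ) :
    (cfc f A).trace = ∑ i, (f (hA.eigenvalues i) : 𝕜) := by
  rw [hA.cfc_eq, IsHermitian.cfc, Unitary.conjStarAlgAut_apply, trace_mul_cycle,
    Unitary.coe_star_mul_self, one_mul, trace_diagonal]
  rfl

variable {n : Type*} [Fintype n] [DecidableEq n] {A : Matrix n n ℂ}

lemma IsHermitian.mpow_eq_cfc (hA : A.IsHermitian) (r : ℝ) :
    mpow A r = cfc (fun x : ℝ ↦ x ^ r) A := by
  rw [mpow, dif_pos hA, hA.cfc_eq]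

lemma IsHermitian.snorm_cfc (hA : A.IsHermitian) (p : ℝ) (f : ℝ → ℝ) :
    snorm p (cfc f A) = (∑ i, |f (hA.eigenvalues i)| ^ p) ^ (1 / p) := by
  have hfin : (spectrum ℝ A).Finite :=
    hA.spectrum_real_eq_range_eigenvalues ▸ Set.finite_range _
  have hcont (g : ℝ → ℝ) : ContinuousOn g (spectrum ℝ A) := hfin.continuousOn g
  have hsq : (cfc f A)ᴴ * cfc f A = cfc (fun x ↦ f x ^ 2) A := by
    rw [← star_eq_conjTranspose, ← cfc_star, ← cfc_mul _ _ A (hcont _) (hcont _)]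
    simp only [star_trivial, sq]
  have hB : ((cfc f A)ᴴ * cfc f A).IsHermitian := hsq ▸ cfc_predicate _ A
  have hpow (y : ℝ) : (y ^ 2) ^ (p / 2) = |y| ^ p := by
    rw [← sq_abs, ← Real.rpow_natCast, ← Real.rpow_mul (abs_nonneg y)]
    ring_nf
  rw [snorm, IsHermitian.mpow_eq_cfc hB, hsq,
    ← cfc_comp' _ _ A ((hfin.image _).continuousOn _) (hcont _)]
  simp only [hpow, hA.trace_cfc, Complex.coe_algebraMap, Complex.re_sum, Complex.ofReal_re]

lemma PosSemidef.snorm_mpow (hA : A.PosSemidef) (p r : ℝ) :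
    snorm p (mpow A r) = (∑ i, hA.isHermitian.eigenvalues i ^ (r * p)) ^ (1 / p) := by
  rw [hA.isHermitian.mpow_eq_cfc, hA.isHermitian.snorm_cfc]
  congr 1
  refine Finset.sum_congr rfl fun i _ ↦ ?_
  have hi := hA.eigenvalues_nonneg i
  rw [abs_of_nonneg (by positivity), ← Real.rpow_mul hi]

lemma PosSemidef.snorm_eq (hA : A.PosSemidef) (p : ℝ) :
    snorm p A = (∑ i, hA.isHermitian.eigenvalues i ^ p) ^ (1 / p) := by
  conv_lhs => rw [← cfc_id ℝ A hA.isHermitian.isSelfAdjoint, hA.isHermitian.snorm_cfc]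
  simp only [id, abs_of_nonneg (hA.eigenvalues_nonneg _)]

end Matrix

noncomputable def onesAddCorner (c u : ℝ) : Matrix (Fin 2) (Fin 2) ℂ := !![(c : ℂ), c; c, c + u]

lemma onesAddCorner_add (c u c' u' : ℝ) :
    onesAddCorner c u + onesAddCorner c' u' = onesAddCorner (c + c') (u + u') := by
  ext i j; fin_cases i <;> fin_cases j <;> simp [onesAddCorner, add_add_add_comm]

lemma smul_onesAddCorner (r c u : ℝ) :
    r • onesAddCorner c u = onesAddCorner (r * c) (r * u) := by
  ext i j; fin_cases i <;> fin_cases j <;> simp [onesAddCorner]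

lemma isHermitian_onesAddCorner (c u : ℝ) : (onesAddCorner c u).IsHermitian := by
  ext i j; fin_cases i <;> fin_cases j <;> simp [onesAddCorner]

lemma posSemidef_onesAddCorner {c u : ℝ} (hc : 0 ≤ c) (hu : 0 ≤ u) :
    (onesAddCorner c u).PosSemidef := by
  have hsum : onesAddCorner c u =
      (c : ℂ) • vecMulVec ![1, 1] ![1, 1] + (u : ℂ) • vecMulVec ![0, 1] ![0, 1] := by
    ext i j; fin_cases i <;> fin_cases j <;> simp [onesAddCorner, vecMulVec]
  rw [hsum]
  have h (v : Fin 2 → ℂ) (hv : star v = v) : (vecMulVec v v).PosSemidef := by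
    simpa [hv] using posSemidef_vecMulVec_self_star v
  exact ((h _ (by ext i; fin_cases i <;> simp)).smul (by exact_mod_cast hc)).add
    ((h _ (by ext i; fin_cases i <;> simp)).smul (by exact_mod_cast hu))

lemma onesAddCorner_mul_self_left (c : ℝ) :
    onesAddCorner c 0 * onesAddCorner c 0 = (2 * c) • onesAddCorner c 0 := by
  ext i j
  fin_cases i <;> fin_cases j <;> simp [onesAddCorner, mul_apply, Fin.sum_univ_two] <;> ring

lemma onesAddCorner_mul_self_right (u : ℝ) :
    onesAddCorner 0 u * onesAddCorner 0 u = u • onesAddCorner 0 u := by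
  ext i j; fin_cases i <;> fin_cases j <;> simp [onesAddCorner, mul_apply, Fin.sum_univ_two]

lemma trace_onesAddCorner (c u : ℝ) : (onesAddCorner c u).trace = ((2 * c + u : ℝ) : ℂ) := by
  simp [onesAddCorner, trace_fin_two]; ring

lemma det_onesAddCorner (c u : ℝ) : (onesAddCorner c u).det = ((c * u : ℝ) : ℂ) := by
  simp [onesAddCorner, det_fin_two]; ring

lemma mpow_onesAddCorner_left (c : ℝ) {r : ℝ} (hr : r ≠ 0) :
    mpow (onesAddCorner c 0) r = onesAddCorner ((2 * c) ^ r / 2) 0 := by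
  have hA := isHermitian_onesAddCorner c 0
  rw [hA.mpow_eq_cfc, cfc_eq_smul_of_mul_self_eq_smul hA (onesAddCorner_mul_self_left c)
    (f := fun x ↦ x ^ r) (Real.zero_rpow hr), smul_onesAddCorner]
  rcases eq_or_ne c 0 with rfl | hc
  · simp [Real.zero_rpow hr]
  · rw [mul_zero]
    congr 1
    field_simp

lemma mpow_onesAddCorner_right (u : ℝ) {r : ℝ} (hr : r ≠ 0) :
    mpow (onesAddCorner 0 u) r = onesAddCorner 0 (u ^ r) := by
  have hA := isHermitian_onesAddCorner 0 u
  rw [hA.mpow_eq_cfc, cfc_eq_smul_of_mul_self_eq_smul hA (onesAddCorner_mul_self_right u)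
    (f := fun x ↦ x ^ r) (Real.zero_rpow hr), smul_onesAddCorner]
  rcases eq_or_ne u 0 with rfl | hu
  · simp [Real.zero_rpow hr]
  · rw [mul_zero]
    congr 1
    field_simp

lemma eigenvalues_onesAddCorner {c u : ℝ} (hA : (onesAddCorner c u).IsHermitian) :
    hA.eigenvalues 0 + hA.eigenvalues 1 = 2 * c + u ∧
      hA.eigenvalues 0 * hA.eigenvalues 1 = c * u := by
  have htr := hA.trace_eq_sum_eigenvalues
  have hdet := hA.det_eq_prod_eigenvalues
  rw [trace_onesAddCorner, Fin.sum_univ_two] at htr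
  rw [det_onesAddCorner, Fin.prod_univ_two] at hdet
  constructor
  · exact RCLike.ofReal_injective (K := ℂ) (by push_cast at htr ⊢; exact htr.symm)
  · exact RCLike.ofReal_injective (K := ℂ) (by push_cast at hdet ⊢; exact hdet.symm)

lemma bounds_of_add_eq_of_mul_eq {c u x y : ℝ} (hc : 0 < c) (hy : 0 ≤ y) (hyx : y ≤ x)
    (hsum : x + y = 2 * c + u) (hprod : x * y = c * u) :
    2 * c ≤ x ∧ x ≤ 2 * c + u ∧ c * u / (2 * c + u) ≤ y ∧ y ≤ u / 2 := by
  have hu : 0 ≤ u := by nlinarith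
  -- `(x - 2c)(y - 2c) = -cu ≤ 0` separates the two roots by `2c`
  have hx : 2 * c ≤ x := by nlinarith
  refine ⟨hx, by linarith, ?_, by nlinarith⟩
  rw [div_le_iff₀ (by positivity)]
  nlinarith

lemma MonotoneOn.add_le_add_of_add_eq_of_mul_eq {g : ℝ → ℝ} (hg : MonotoneOn g (Set.Ici 0))
    {c u x y : ℝ} (hc : 0 < c) (hx : 0 ≤ x) (hy : 0 ≤ y)
    (hsum : x + y = 2 * c + u) (hprod : x * y = c * u) :
    g (2 * c) + g (c * u / (2 * c + u)) ≤ g x + g y ∧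
      g x + g y ≤ g (2 * c + u) + g (u / 2) := by
  wlog hyx : y ≤ x generalizing x y
  · rw [add_comm (g x)]
    exact this hy hx (by linarith) (by linarith) (le_of_not_ge hyx)
  obtain ⟨h1, h2, h3, h4⟩ := bounds_of_add_eq_of_mul_eq hc hy hyx hsum hprod
  have hu : 0 ≤ u := by nlinarith
  have hmem {z : ℝ} (hz : 0 ≤ z) : z ∈ Set.Ici (0 : ℝ) := hz
  constructor
  · exact add_le_add (hg (hmem (by positivity)) (hmem hx) h1)
      (hg (hmem (by positivity)) (hmem hy) h3)
  · exact add_le_add (hg (hmem hx) (hmem (by positivity)) h2)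
      (hg (hmem hy) (hmem (by positivity)) h4)

lemma two_add_rpow_le {p t : ℝ} (hp1 : p ≤ 1) (ht : 0 ≤ t) :
    (2 + t) ^ p ≤ 2 ^ p + t := by
  have h2 : (2 : ℝ) ^ p ≤ 2 := by
    simpa using Real.rpow_le_rpow_of_exponent_le (by norm_num : (1 : ℝ) ≤ 2) hp1
  calc (2 + t) ^ p = 2 ^ p * (1 + t / 2) ^ p := by
        rw [← Real.mul_rpow (by norm_num) (by positivity)]; ring_nf
    _ ≤ 2 ^ p * (1 + t / 2) := by
        gcongr; exact Real.rpow_le_self_of_one_le (by linarith) hp1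
    _ ≤ 2 ^ p + t := by nlinarith

open Filter Topology in
lemma exists_pos_rpow_add_lt {p q : ℝ} (hp0 : 0 < p) (hp1 : p < 1) (hq : 1 < q) :
    ∃ t : ℝ, 0 < t ∧ (2 + t) ^ p + (t / 2) ^ p <
      (2 ^ q) ^ (p / q) + (2 ^ q / 2 * t ^ q / (2 ^ q + t ^ q)) ^ (p / q) := by
  have hq0 : 0 < q := by linarith
  set K : ℝ → ℝ := fun t ↦ (2 ^ q / 2 / (2 ^ q + t ^ q)) ^ (p / q)
  have hK : Tendsto K (𝓝[>] 0) (𝓝 ((1 / 2) ^ (p / q))) := by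
    have h2q : (2 : ℝ) ^ q ≠ 0 := by positivity
    have hcont : ContinuousAt K 0 := by
      refine ContinuousAt.rpow_const (continuousAt_const.div
        (continuousAt_const.add (Real.continuousAt_rpow_const 0 q (Or.inr hq0.le))) ?_) ?_
      · simpa [Real.zero_rpow hq0.ne'] using h2q
      · exact Or.inr (by positivity)
    convert hcont.tendsto.mono_left nhdsWithin_le_nhds using 2
    simp [K, Real.zero_rpow hq0.ne']
    field_simp
  have hL : Tendsto (fun t : ℝ ↦ t ^ (1 - p) + (1 / 2) ^ p) (𝓝[>] 0) (𝓝 ((1 / 2) ^ p)) := by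
    have hcont : ContinuousAt (fun t : ℝ ↦ t ^ (1 - p) + (1 / 2) ^ p) 0 :=
      (Real.continuousAt_rpow_const 0 _ (Or.inr (by linarith))).add continuousAt_const
    convert hcont.tendsto.mono_left nhdsWithin_le_nhds using 2
    simp [Real.zero_rpow (by linarith : (1 - p) ≠ 0)]
  have hgap : ((1 : ℝ) / 2) ^ p < (1 / 2) ^ (p / q) :=
    Real.rpow_lt_rpow_of_exponent_gt (by norm_num) (by norm_num) (div_lt_self hp0 hq)
  obtain ⟨t, hlt, ht : 0 < t⟩ := ((hL.eventually_lt hK hgap).and self_mem_nhdsWithin).exists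
  refine ⟨t, ht, ?_⟩
  calc (2 + t) ^ p + (t / 2) ^ p ≤ 2 ^ p + t ^ p * (t ^ (1 - p) + (1 / 2) ^ p) := by
        rw [mul_add, ← Real.rpow_add ht, add_sub_cancel, Real.rpow_one,
          ← Real.mul_rpow ht.le (by norm_num), mul_one_div]
        linarith [two_add_rpow_le hp1.le ht.le]
    _ < 2 ^ p + t ^ p * K t := by gcongr
    _ = (2 ^ q) ^ (p / q) + (2 ^ q / 2 * t ^ q / (2 ^ q + t ^ q)) ^ (p / q) := by
        have hpow (x : ℝ) (hx : 0 ≤ x) : (x ^ q) ^ (p / q) = x ^ p := by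
          rw [← Real.rpow_mul hx, mul_div_cancel₀ _ hq0.ne']
        rw [hpow 2 (by norm_num), mul_comm (2 ^ q / 2), mul_div_assoc,
          Real.mul_rpow (by positivity) (by positivity), hpow t ht.le]

lemma snorm_onesAddCorner_le {c u p : ℝ} (hc : 0 < c) (hu : 0 ≤ u) (hp : 0 < p) :
    snorm p (onesAddCorner c u) ≤ ((2 * c + u) ^ p + (u / 2) ^ p) ^ (1 / p) := by
  have hA := posSemidef_onesAddCorner hc.le hu
  obtain ⟨hsum, hprod⟩ := eigenvalues_onesAddCorner hA.isHermitian
  have h0 := hA.eigenvalues_nonneg 0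
  have h1 := hA.eigenvalues_nonneg 1
  rw [hA.snorm_eq, Fin.sum_univ_two]
  refine Real.rpow_le_rpow (by positivity) ?_ (by positivity)
  have hg := Real.monotoneOn_rpow_Ici_of_exponent_nonneg hp.le
  exact (hg.add_le_add_of_add_eq_of_mul_eq hc h0 h1 hsum hprod).2

lemma le_snorm_mpow_onesAddCorner {c u p r : ℝ} (hc : 0 < c) (hu : 0 ≤ u) (hp : 0 < p)
    (hr : 0 ≤ r) :
    ((2 * c) ^ (r * p) + (c * u / (2 * c + u)) ^ (r * p)) ^ (1 / p) ≤
      snorm p (mpow (onesAddCorner c u) r) := by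
  have hA := posSemidef_onesAddCorner hc.le hu
  obtain ⟨hsum, hprod⟩ := eigenvalues_onesAddCorner hA.isHermitian
  have h0 := hA.eigenvalues_nonneg 0
  have h1 := hA.eigenvalues_nonneg 1
  rw [hA.snorm_mpow, Fin.sum_univ_two]
  refine Real.rpow_le_rpow (by positivity) ?_ (by positivity)
  have hg := Real.monotoneOn_rpow_Ici_of_exponent_nonneg (mul_nonneg hr hp.le)
  exact (hg.add_le_add_of_add_eq_of_mul_eq hc h0 h1 hsum hprod).1

theorem stmt15 (p q : ℝ) (hp0 : 0 < p) (hp1 : p < 1) (hq : 1 < q) :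
    ∃ x y : Matrix (Fin 2) (Fin 2) ℂ, x.PosSemidef ∧ y.PosSemidef ∧
      snorm p (x + y) < snorm p (mpow (mpow x q + mpow y q) (1 / q)) := by
  obtain ⟨t, ht, hlt⟩ := exists_pos_rpow_add_lt hp0 hp1 hq
  have hq0 : 0 < q := by linarith
  refine ⟨onesAddCorner 1 0, onesAddCorner 0 t, posSemidef_onesAddCorner zero_le_one le_rfl,
    posSemidef_onesAddCorner le_rfl ht.le, ?_⟩
  rw [mpow_onesAddCorner_left 1 hq0.ne', mpow_onesAddCorner_right t hq0.ne', onesAddCorner_add,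
    onesAddCorner_add, add_zero, zero_add, add_zero, zero_add, mul_one]
  have h2q : 2 * (2 ^ q / 2 : ℝ) = 2 ^ q := by ring
  calc snorm p (onesAddCorner 1 t) ≤ ((2 * 1 + t) ^ p + (t / 2) ^ p) ^ (1 / p) :=
        snorm_onesAddCorner_le one_pos ht.le hp0
    _ < ((2 * (2 ^ q / 2)) ^ (1 / q * p) +
          (2 ^ q / 2 * t ^ q / (2 * (2 ^ q / 2) + t ^ q)) ^ (1 / q * p)) ^ (1 / p) := by
        rw [mul_one, h2q, one_div_mul_eq_div]
        exact Real.rpow_lt_rpow (by positivity) hlt (by positivity)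
    _ ≤ snorm p (mpow (onesAddCorner (2 ^ q / 2) (t ^ q)) (1 / q)) :=
        le_snorm_mpow_onesAddCorner (by positivity) (by positivity) hp0 (by positivity)
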